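/- Let γ > 0, c ∈ ℝ^d with c ≠ 0, λ ∈ ℝ, and g ∈ ℝ^d with g ≠ 0 and ‖g‖² − 2γλ ≥ 0. If √(‖g‖² − 2γλ)·(c/‖c‖) = g, then λ = 0 and c = μ·g where μ = ‖c‖/‖g‖ > 0. -/
import Mathlib


open scoped RealInnerProductSpace

/-- **Fixed points satisfy the first-order optimality conditions.** If
`√(‖g‖² − 2γλ)·(c/‖c‖) = g` with `g ≠ 0`, then `λ = 0` and `c = μ·g` with
`μ = ‖c‖/‖g‖ > 0`. -/
theorem stmt_8 {d : ℕ} (γ : ℝ) (hγ : 0 < γ)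
    (c g : EuclideanSpace ℝ (Fin d)) (hc : c ≠ 0) (hg : g ≠ 0) (lam : ℝ)
    (hnn : 0 ≤ ‖g‖ ^ 2 - 2 * γ * lam)
    (hfix : Real.sqrt (‖g‖ ^ 2 - 2 * γ * lam) • (‖c‖⁻¹ • c) = g) :
    lam = 0 ∧ 0 < ‖c‖ / ‖g‖ ∧ c = (‖c‖ / ‖g‖) • g := by
  have hcn : (0:ℝ) < ‖c‖ := norm_pos_iff.mpr hc
  have hgn : (0:ℝ) < ‖g‖ := norm_pos_iff.mpr hg
  have hnorm : Real.sqrt (‖g‖ ^ 2 - 2 * γ * lam) = ‖g‖ := by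
    have := congrArg norm hfix
    rwa [norm_smul, norm_smul, norm_inv, norm_norm, Real.norm_eq_abs,
      abs_of_nonneg (Real.sqrt_nonneg _), inv_mul_cancel₀ hcn.ne', mul_one] at this
  have hsq : ‖g‖ ^ 2 - 2 * γ * lam = ‖g‖ ^ 2 := by
    have := congrArg (· ^ 2) hnorm
    simpa [Real.sq_sqrt hnn] using this
  have hlam : lam = 0 := by
    have h2 : 2 * γ * lam = 0 := by linarith
    have := mul_eq_zero.mp h2
    rcases this with h | h
    · exact absurd h (by positivity)
    · exact h
  refine ⟨hlam, div_pos hcn hgn, ?_⟩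
  rw [hnorm] at hfix
  rw [smul_smul] at hfix
  set n := ‖g‖ with hn
  rw [← hfix, smul_smul]
  nth_rewrite 1 [← one_smul ℝ c]
  congr 1
  field_simp
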